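/- Let k ∈ ℕ and s ∈ [k−1, k). Let α > k−1, β ∈ ℝ, and n ∈ ℕ. Then for every x ∈ (−1, 1), the right Caputo fractional derivative satisfies ^C D_+^s[ (1−·)^α P_n^{(α,β)} ](x) = [Γ(n+α+1)/Γ(n+α−s+1)] · (1−x)^{α−s} · P_n^{(α−s, β+s)}(x); that is, ^C D_+^s[^+J_n^{(−α,β)}] = [Γ(n+α+1)/Γ(n+α−s+1)] · ^+J_n^{(−α+s, β+s)} on (−1,1). -/

import Mathlib

open MeasureTheory Filter Finset

/-- Jacobi polynomial with real parameters. -/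
noncomputable def jacobiP (a b : ℝ) (n : ℕ) (x : ℝ) : ℝ :=
  ∑ j ∈ Finset.range (n + 1),
    ((ascPochhammer ℝ j).eval ((n : ℝ) + a + b + 1) / (Nat.factorial j : ℝ)) *
      ((ascPochhammer ℝ (n - j)).eval (a + (j : ℝ) + 1) / (Nat.factorial (n - j) : ℝ)) *
      ((x - 1) / 2) ^ j

/-- Right Riemann-Liouville fractional integral on (-1,1). -/
noncomputable def Iplus (ρ : ℝ) (v : ℝ → ℝ) (x : ℝ) : ℝ :=
  (1 / Real.Gamma ρ) * ∫ y in x..1, (y - x) ^ (ρ - 1) * v y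

/-- Left Riemann-Liouville fractional integral on (-1,1). -/
noncomputable def Iminus (ρ : ℝ) (v : ℝ → ℝ) (x : ℝ) : ℝ :=
  (1 / Real.Gamma ρ) * ∫ y in (-1 : ℝ)..x, (x - y) ^ (ρ - 1) * v y

/-- Right Riemann-Liouville fractional derivative of order `s ∈ [k-1,k)`. -/
noncomputable def Dplus (s : ℝ) (k : ℕ) (v : ℝ → ℝ) (x : ℝ) : ℝ :=
  (-1 : ℝ) ^ k * iteratedDeriv k (Iplus ((k : ℝ) - s) v) x

/-- Left Riemann-Liouville fractional derivative of order `s ∈ [k-1,k)`. -/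
noncomputable def Dminus (s : ℝ) (k : ℕ) (v : ℝ → ℝ) (x : ℝ) : ℝ :=
  iteratedDeriv k (Iminus ((k : ℝ) - s) v) x

/-- Right Caputo fractional derivative of order `s ∈ [k-1,k)`. -/
noncomputable def CDplus (s : ℝ) (k : ℕ) (v : ℝ → ℝ) (x : ℝ) : ℝ :=
  ((-1 : ℝ) ^ k / Real.Gamma ((k : ℝ) - s)) *
    ∫ y in x..1, (y - x) ^ ((k : ℝ) - s - 1) * iteratedDeriv k v y

/-- Generalized Jacobi function `⁺J_n^{(-α,β)}(x) = (1-x)^α P_n^{(α,β)}(x)` (for `α > -1`). -/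
noncomputable def GJFplus (α β : ℝ) (n : ℕ) (x : ℝ) : ℝ :=
  (1 - x) ^ α * jacobiP α β n x

/-!
Expanding `P_n^{(α,β)}` in powers of `(x - 1)/2` writes `(1 - x)^α P_n^{(α,β)}(x)` as a finite
combination of the powers `(1 - x)^(α + j)`. On each power the right Caputo derivative acts by
`(1 - x)^γ ↦ Γ(γ + 1)/Γ(γ - s + 1) (1 - x)^(γ - s)`: the `k`-th derivative is a descending
Pochhammer multiple of `(1 - x)^(γ - k)`, and the remaining integral is a Beta integral. The
resulting coefficients are, via `(a)_m = Γ(a + m)/Γ(a)`, exactly `Γ(n + α + 1)/Γ(n + α - s + 1)`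
times those of `(1 - x)^(α - s) P_n^{(α - s, β + s)}(x)`.
-/

namespace Real

lemma ascPochhammer_eval_eq_Gamma_div {a : ℝ} (ha : 0 < a) (n : ℕ) :
    (ascPochhammer ℝ n).eval a = Gamma (a + n) / Gamma a := by
  have h := Complex.Gamma_add_nat_div_Gamma_eq (a : ℂ) (n := n) fun m hm => by
    have : a = -m := by exact_mod_cast hm
    linarith [(Nat.cast_nonneg m : (0 : ℝ) ≤ m)]
  rw [← Complex.ofReal_natCast, ← Complex.ofReal_add, Complex.Gamma_ofReal,
    Complex.Gamma_ofReal, ← ascPochhammer_map (algebraMap ℝ ℂ), Polynomial.eval_map_algebraMap,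
    ← Complex.coe_algebraMap, Polynomial.aeval_algebraMap_apply_eq_algebraMap_eval] at h
  exact_mod_cast h.symm

lemma descPochhammer_eval_eq_Gamma_div {r : ℝ} {k : ℕ} (h : 0 < r - k + 1) :
    (descPochhammer ℝ k).eval r = Gamma (r + 1) / Gamma (r - k + 1) := by
  rw [descPochhammer_eval_eq_ascPochhammer, ascPochhammer_eval_eq_Gamma_div h]
  ring_nf

lemma integral_rpow_mul_one_sub_rpow {p q : ℝ} (hp : 0 < p) (hq : 0 < q) :
    ∫ t in (0 : ℝ)..1, t ^ (p - 1) * (1 - t) ^ (q - 1) = Gamma p * Gamma q / Gamma (p + q) := by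
  have h := Complex.betaIntegral_eq_Gamma_mul_div p q (by simpa) (by simpa)
  rw [← Complex.ofReal_add, Complex.Gamma_ofReal, Complex.Gamma_ofReal, Complex.Gamma_ofReal,
    Complex.betaIntegral] at h
  have hreal : ∫ t in (0 : ℝ)..1, (t : ℂ) ^ ((p : ℂ) - 1) * (1 - (t : ℂ)) ^ ((q : ℂ) - 1) =
      ((∫ t in (0 : ℝ)..1, t ^ (p - 1) * (1 - t) ^ (q - 1) : ℝ) : ℂ) := by
    rw [← intervalIntegral.integral_ofReal]
    refine intervalIntegral.integral_congr fun t ht => ?_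
    rw [Set.uIcc_of_le zero_le_one] at ht
    push_cast [Complex.ofReal_cpow ht.1, Complex.ofReal_cpow (sub_nonneg.2 ht.2)]
    rfl
  rw [hreal] at h
  exact_mod_cast h

lemma rpow_add_natCast_of_neg_one_lt {a : ℝ} (ha : -1 < a) (x : ℝ) (j : ℕ) :
    x ^ (a + j) = x ^ a * x ^ j := by
  rcases j with _ | j
  · simp
  rcases eq_or_ne x 0 with rfl | hx
  · exact rpow_add_natCast' le_rfl (by push_cast; linarith [(j.cast_nonneg : (0 : ℝ) ≤ j)])
  · exact rpow_add_natCast hx a _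

end Real

open Real

lemma integral_sub_rpow_mul_one_sub_rpow {x p q : ℝ} (hx : x < 1) (hp : 0 < p) (hq : 0 < q) :
    ∫ y in x..1, (y - x) ^ (p - 1) * (1 - y) ^ (q - 1) =
      (1 - x) ^ (p + q - 1) * (Gamma p * Gamma q / Gamma (p + q)) := by
  have h0 : 0 < 1 - x := sub_pos.2 hx
  have hsub := intervalIntegral.smul_integral_comp_mul_add (a := 0) (b := 1)
    (fun y => (y - x) ^ (p - 1) * (1 - y) ^ (q - 1)) (1 - x) x
  simp only [mul_zero, zero_add, mul_one, sub_add_cancel, smul_eq_mul] at hsub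
  rw [← hsub, ← integral_rpow_mul_one_sub_rpow hp hq, ← intervalIntegral.integral_const_mul,
    ← intervalIntegral.integral_const_mul]
  refine intervalIntegral.integral_congr fun t ht => ?_
  rw [Set.uIcc_of_le zero_le_one] at ht
  rw [show (1 - x) * t + x - x = (1 - x) * t by ring,
    show 1 - ((1 - x) * t + x) = (1 - x) * (1 - t) by ring,
    mul_rpow h0.le ht.1, mul_rpow h0.le (sub_nonneg.2 ht.2),
    show p + q - 1 = (p - 1) + (q - 1) + 1 by ring, rpow_add h0, rpow_add h0, rpow_one]
  ring

lemma intervalIntegrable_sub_rpow_mul_one_sub_rpow {x p q : ℝ} (hx : x < 1) (hp : 0 < p)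
    (hq : 0 < q) :
    IntervalIntegrable (fun y => (y - x) ^ (p - 1) * (1 - y) ^ (q - 1)) volume x 1 :=
  -- a non-integrable function would have integral `0`
  intervalIntegral.intervalIntegrable_of_integral_ne_zero <| by
    rw [integral_sub_rpow_mul_one_sub_rpow hx hp hq]
    have := Gamma_pos_of_pos hp
    have := Gamma_pos_of_pos hq
    have := Gamma_pos_of_pos (add_pos hp hq)
    have := sub_pos.2 hx
    positivity

lemma iteratedDeriv_one_sub_rpow (k : ℕ) (γ y : ℝ) :
    iteratedDeriv k (fun y : ℝ => (1 - y) ^ γ) y =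
      (-1) ^ k * (descPochhammer ℝ k).eval γ * (1 - y) ^ (γ - k) := by
  simp only [iteratedDeriv_comp_const_sub (f := fun y : ℝ => y ^ γ), iteratedDeriv_eq_iterate,
    iter_deriv_rpow_const, smul_eq_mul, mul_assoc]

section Caputo

variable {s x : ℝ} {k : ℕ}

lemma CDplus_const_mul (c : ℝ) (v : ℝ → ℝ) :
    CDplus s k (fun y => c * v y) x = c * CDplus s k v x := by
  simp only [CDplus, iteratedDeriv_const_mul_field, mul_left_comm _ c,
    intervalIntegral.integral_const_mul]

lemma CDplus_finset_sum {ι : Type*} (I : Finset ι) (f : ι → ℝ → ℝ) (hx : x < 1)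
    (hf : ∀ i ∈ I, ∀ y ∈ Set.Ioo x 1, ContDiffAt ℝ k (f i) y)
    (hint : ∀ i ∈ I, IntervalIntegrable
      (fun y => (y - x) ^ ((k : ℝ) - s - 1) * iteratedDeriv k (f i) y) volume x 1) :
    CDplus s k (fun y => ∑ i ∈ I, f i y) x = ∑ i ∈ I, CDplus s k (f i) x := by
  simp only [CDplus, ← mul_sum]
  rw [← intervalIntegral.integral_finsetSum hint]
  congr 1
  refine intervalIntegral.integral_congr_ae ?_
  filter_upwards [Measure.ae_ne volume 1] with y hy1 hy
  rw [Set.uIoc_of_le hx.le] at hy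
  rw [iteratedDeriv_fun_sum fun i hi => hf i hi y ⟨hy.1, lt_of_le_of_ne hy.2 hy1⟩,
    mul_sum]

lemma CDplus_one_sub_rpow {γ : ℝ} (hx : x < 1) (hs : s < k) (hγ : (k : ℝ) - 1 < γ) :
    CDplus s k (fun y => (1 - y) ^ γ) x =
      Gamma (γ + 1) / Gamma (γ - s + 1) * (1 - x) ^ (γ - s) := by
  have hks : 0 < (k : ℝ) - s := sub_pos.2 hs
  have hγk : 0 < γ - k + 1 := by linarith
  have hβ := integral_sub_rpow_mul_one_sub_rpow hx hks hγk
  rw [show γ - k + 1 - 1 = γ - k by ring, show (k : ℝ) - s + (γ - k + 1) - 1 = γ - s by ring,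
    show (k : ℝ) - s + (γ - k + 1) = γ - s + 1 by ring] at hβ
  simp only [CDplus, iteratedDeriv_one_sub_rpow, mul_left_comm _ ((-1 : ℝ) ^ k * _),
    intervalIntegral.integral_const_mul, hβ, descPochhammer_eval_eq_Gamma_div hγk]
  have := (Gamma_pos_of_pos hks).ne'
  have := (Gamma_pos_of_pos hγk).ne'
  field_simp
  rw [← pow_mul, mul_comm k, pow_mul, neg_one_sq, one_pow, one_mul]

lemma CDplus_sum_mul_one_sub_rpow {ι : Type*} (I : Finset ι) (c γ : ι → ℝ) (hx : x < 1)
    (hs : s < k) (hγ : ∀ i ∈ I, (k : ℝ) - 1 < γ i) :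
    CDplus s k (fun y => ∑ i ∈ I, c i * (1 - y) ^ γ i) x =
      ∑ i ∈ I, c i * (Gamma (γ i + 1) / Gamma (γ i - s + 1) * (1 - x) ^ (γ i - s)) := by
  rw [CDplus_finset_sum I (fun i y => c i * (1 - y) ^ γ i) hx]
  · exact sum_congr rfl fun i hi => by
      rw [CDplus_const_mul, CDplus_one_sub_rpow hx hs (hγ i hi)]
  · intro i _ y hy
    exact contDiffAt_const.mul
      ((contDiffAt_const.sub contDiffAt_id).rpow_const_of_ne (sub_ne_zero.2 hy.2.ne'))
  · intro i hi
    have hγk : 0 < γ i - k + 1 := by linarith [hγ i hi]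
    have := (intervalIntegrable_sub_rpow_mul_one_sub_rpow hx (sub_pos.2 hs) hγk).const_mul
      (c i * ((-1) ^ k * (descPochhammer ℝ k).eval (γ i)))
    simp only [iteratedDeriv_const_mul_field, iteratedDeriv_one_sub_rpow]
    convert this using 2 with y
    rw [show γ i - k + 1 - 1 = γ i - k by ring]
    ring

end Caputo

noncomputable def jacobiCoeff (a b : ℝ) (n j : ℕ) : ℝ :=
  (ascPochhammer ℝ j).eval ((n : ℝ) + a + b + 1) / (Nat.factorial j : ℝ) *
    ((ascPochhammer ℝ (n - j)).eval (a + (j : ℝ) + 1) / (Nat.factorial (n - j) : ℝ))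

lemma one_sub_rpow_mul_jacobiP {a : ℝ} (ha : -1 < a) (b : ℝ) (n : ℕ) (y : ℝ) :
    (1 - y) ^ a * jacobiP a b n y =
      ∑ j ∈ range (n + 1), jacobiCoeff a b n j * (-1 / 2) ^ j * (1 - y) ^ (a + j) := by
  rw [jacobiP, mul_sum]
  refine sum_congr rfl fun j _ => ?_
  rw [rpow_add_natCast_of_neg_one_lt ha, jacobiCoeff,
    show (y - 1) / 2 = -1 / 2 * (1 - y) by ring, mul_pow]
  ring

lemma jacobiCoeff_eq_Gamma {a : ℝ} (ha : -1 < a) (b : ℝ) {n j : ℕ} (hj : j ≤ n) :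
    jacobiCoeff a b n j = (ascPochhammer ℝ j).eval ((n : ℝ) + a + b + 1) / (Nat.factorial j : ℝ) *
      (Gamma (n + a + 1) / Gamma (a + j + 1) / (Nat.factorial (n - j) : ℝ)) := by
  rw [jacobiCoeff,
    ascPochhammer_eval_eq_Gamma_div (a := a + j + 1) (by linarith [j.cast_nonneg (α := ℝ)]),
    Nat.cast_sub hj]
  ring_nf

lemma Gamma_div_Gamma_mul_jacobiCoeff {α s : ℝ} (hα : -1 < α) (hαs : -1 < α - s) (β : ℝ)
    {n j : ℕ} (hj : j ≤ n) :
    Gamma (α + j + 1) / Gamma (α + j - s + 1) * jacobiCoeff α β n j =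
      Gamma (n + α + 1) / Gamma (n + α - s + 1) * jacobiCoeff (α - s) (β + s) n j := by
  have hj0 : (0 : ℝ) ≤ j := j.cast_nonneg
  have hn0 : (0 : ℝ) ≤ n := n.cast_nonneg
  rw [jacobiCoeff_eq_Gamma hα β hj, jacobiCoeff_eq_Gamma hαs (β + s) hj]
  have := (Gamma_pos_of_pos (show 0 < α + j + 1 by linarith)).ne'
  have := (Gamma_pos_of_pos (show 0 < α + j - s + 1 by linarith)).ne'
  have := (Gamma_pos_of_pos (show 0 < n + α - s + 1 by linarith)).ne'
  rw [show (n : ℝ) + (α - s) + (β + s) + 1 = n + α + β + 1 by ring,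
    show (n : ℝ) + (α - s) + 1 = n + α - s + 1 by ring,
    show α - s + j + 1 = α + j - s + 1 by ring]
  field_simp

theorem stmt19_general (k : ℕ) (s : ℝ) (hs2 : s < k)
    (α β : ℝ) (hα : (k : ℝ) - 1 < α) (n : ℕ) :
    ∀ x ∈ Set.Ioo (-1 : ℝ) 1,
      CDplus s k (fun y => (1 - y) ^ α * jacobiP α β n y) x =
        Real.Gamma ((n : ℝ) + α + 1) / Real.Gamma ((n : ℝ) + α - s + 1) *
          ((1 - x) ^ (α - s) * jacobiP (α - s) (β + s) n x) ∧
      CDplus s k (GJFplus α β n) x =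
        Real.Gamma ((n : ℝ) + α + 1) / Real.Gamma ((n : ℝ) + α - s + 1) *
          GJFplus (α - s) (β + s) n x := by
  intro x hx
  have hk0 : (0 : ℝ) ≤ k := k.cast_nonneg
  have hα1 : -1 < α := by linarith
  have hαs : -1 < α - s := by linarith
  have hCD : CDplus s k (fun y => (1 - y) ^ α * jacobiP α β n y) x =
      Gamma (n + α + 1) / Gamma (n + α - s + 1) *
        ((1 - x) ^ (α - s) * jacobiP (α - s) (β + s) n x) := by
    simp only [one_sub_rpow_mul_jacobiP hα1, one_sub_rpow_mul_jacobiP hαs, mul_sum]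
    rw [CDplus_sum_mul_one_sub_rpow _ _ _ hx.2 hs2 fun j _ => by linarith [j.cast_nonneg (α := ℝ)]]
    refine sum_congr rfl fun j hj => ?_
    rw [show (1 - x) ^ (α + j - s) = (1 - x) ^ (α - s + j) by ring_nf]
    linear_combination (-1 / 2 : ℝ) ^ j * (1 - x) ^ (α - s + j) *
      Gamma_div_Gamma_mul_jacobiCoeff hα1 hαs β (Nat.lt_succ_iff.mp (mem_range.mp hj))
  exact ⟨hCD, hCD⟩

/-- Theorem 6.2, right Caputo fractional derivative of GJFs. -/
theorem stmt19 (k : ℕ) (hk : 1 ≤ k) (s : ℝ) (hs1 : (k : ℝ) - 1 ≤ s) (hs2 : s < k)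
    (α β : ℝ) (hα : (k : ℝ) - 1 < α) (n : ℕ) :
    ∀ x ∈ Set.Ioo (-1 : ℝ) 1,
      CDplus s k (fun y => (1 - y) ^ α * jacobiP α β n y) x =
        Real.Gamma ((n : ℝ) + α + 1) / Real.Gamma ((n : ℝ) + α - s + 1) *
          ((1 - x) ^ (α - s) * jacobiP (α - s) (β + s) n x) ∧
      CDplus s k (GJFplus α β n) x =
        Real.Gamma ((n : ℝ) + α + 1) / Real.Gamma ((n : ℝ) + α - s + 1) *
          GJFplus (α - s) (β + s) n x :=
  stmt19_general k s hs2 α β hα n
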